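/- arXiv:1908.11360 — 3 statements merged into one kernel-verified Lean document; each statement's English description precedes it below -/
import Mathlib

section
/- The symmetry rule (sym_i) is admissible in G3Ldm_n^m: for every agent i ∈ Ag, if the labelled sequent R, R_i wu, R_i uw, Γ is derivable in G3Ldm_n^m, then R, R_i wu, Γ is derivable in G3Ldm_n^m. -/
namespace Stit

/-- Formulas of the language `L^m` (negation normal form), with agents `Fin m`
and propositional variables indexed by `ℕ`. -/
inductive Fml (m : ℕ) : Type
  | pos : ℕ → Fml m                  -- p
  | neg : ℕ → Fml m                  -- p̄
  | and : Fml m → Fml m → Fml m      -- φ ∧ ψ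
  | or  : Fml m → Fml m → Fml m      -- φ ∨ ψ
  | box : Fml m → Fml m              -- □φ
  | dia : Fml m → Fml m              -- ◇φ
  | ag  : Fin m → Fml m → Fml m      -- [i]φ
  | dag : Fin m → Fml m → Fml m      -- ⟨i⟩φ

namespace Fml

/-- Negation `φ̄`: replace every connective/modality by its dual and swap `p` with `p̄`. -/
def negF {m : ℕ} : Fml m → Fml m
  | pos p => neg p
  | neg p => pos p
  | and φ ψ => or φ.negF ψ.negF
  | or φ ψ => and φ.negF ψ.negF
  | box φ => dia φ.negF
  | dia φ => box φ.negF
  | ag i φ => dag i φ.negF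
  | dag i φ => ag i φ.negF

/-- `φ → ψ` abbreviates `φ̄ ∨ ψ`. -/
def impF {m : ℕ} (φ ψ : Fml m) : Fml m := or φ.negF ψ

end Fml

/-- `f 0 ∧ f 1 ∧ ⋯ ∧ f k` (left-associated). -/
def conjUpTo {m : ℕ} (f : ℕ → Fml m) : ℕ → Fml m
  | 0 => f 0
  | k+1 => Fml.and (conjUpTo f k) (f (k+1))

/-- `f 0 ∨ f 1 ∨ ⋯ ∨ f k` (left-associated). -/
def disjUpTo {m : ℕ} (f : ℕ → Fml m) : ℕ → Fml m
  | 0 => f 0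
  | k+1 => Fml.or (disjUpTo f k) (f (k+1))

/-- `(f 0)̄ ∧ ((f 1)̄ ∧ ⋯ ((f (j-1))̄ ∧ base))`. -/
def prefNegConj {m : ℕ} (f : ℕ → Fml m) : ℕ → Fml m → Fml m
  | 0, base => base
  | j+1, base => prefNegConj f j (Fml.and (f j).negF base)

/-- The antecedent `◇[i]φ_0 ∧ ◇(φ̄_0 ∧ [i]φ_1) ∧ ⋯ ∧ ◇(φ̄_0 ∧ ⋯ ∧ φ̄_{n'-1} ∧ [i]φ_{n'})`
of the (n'+1)-choice axiom. -/
def apcAnte {m : ℕ} (i : Fin m) (f : ℕ → Fml m) (n' : ℕ) : Fml m :=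
  conjUpTo (fun j => Fml.dia (prefNegConj f j (Fml.ag i (f j)))) n'

/-- The n-choice axiom `APC_n^i` for `n = n' + 1` choices `φ_0, …, φ_{n'}`. -/
def apcAx {m : ℕ} (i : Fin m) (f : ℕ → Fml m) (n' : ℕ) : Fml m :=
  (apcAnte i f n').impF (disjUpTo f n')

def diaAgIdx {m : ℕ} (f : Fin m → Fml m) (j : ℕ) : Fml m :=
  if h : j < m then Fml.dia (Fml.ag ⟨j, h⟩ (f ⟨j, h⟩)) else Fml.pos 0

def agIdx {m : ℕ} (f : Fin m → Fml m) (j : ℕ) : Fml m :=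
  if h : j < m then Fml.ag ⟨j, h⟩ (f ⟨j, h⟩) else Fml.pos 0

/-- The independence-of-agents axiom `⋀_{i∈Ag} ◇[i]φ_i → ◇(⋀_{i∈Ag} [i]φ_i)`
(for `m ≥ 1` agents). -/
def ioaAx {m : ℕ} (f : Fin m → Fml m) : Fml m :=
  (conjUpTo (diaAgIdx f) (m-1)).impF (Fml.dia (conjUpTo (agIdx f) (m-1)))

/-- An `Ldm_n^m`-model on the carrier `W`: each `rel i` is an equivalence relation (C1),
independence of agents (C2), the `n`-choice condition when `n > 0` (C3), plus a valuation. -/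
structure ModelOn (n m : ℕ) (W : Type) : Type where
  nonemp : Nonempty W
  rel : Fin m → W → W → Prop
  refl : ∀ i w, rel i w w
  symm : ∀ i w u, rel i w u → rel i u w
  trans : ∀ i w u v, rel i w u → rel i u v → rel i w v
  ioa : ∀ u : Fin m → W, ∃ v, ∀ i, rel i (u i) v
  apc : 0 < n → ∀ (i : Fin m) (w : Fin (n+1) → W),
      ∃ k j : Fin (n+1), k < j ∧ rel i (w k) (w j)
  val : ℕ → Set W

/-- Satisfaction `M, w ⊩ φ`. -/
def Sat {n m : ℕ} {W : Type} (M : ModelOn n m W) : W → Fml m → Prop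
  | w, .pos p => w ∈ M.val p
  | w, .neg p => w ∉ M.val p
  | w, .and φ ψ => Sat M w φ ∧ Sat M w ψ
  | w, .or φ ψ => Sat M w φ ∨ Sat M w ψ
  | _, .box φ => ∀ u, Sat M u φ
  | _, .dia φ => ∃ u, Sat M u φ
  | w, .ag i φ => ∀ u, M.rel i w u → Sat M u φ
  | w, .dag i φ => ∃ u, M.rel i w u ∧ Sat M u φ

/-- Validity: `⊩ φ`. -/
def Valid (n m : ℕ) (φ : Fml m) : Prop :=
  ∀ (W : Type) (M : ModelOn n m W) (w : W), Sat M w φ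

/-- Semantic consequence `Γ ⊩ φ`. -/
def SemConseq (n m : ℕ) (Γ : Set (Fml m)) (φ : Fml m) : Prop :=
  ∀ (W : Type) (M : ModelOn n m W) (w : W), (∀ ψ ∈ Γ, Sat M w ψ) → Sat M w φ

/-- The Hilbert calculus `Ldm_n^m`: classical propositional logic, S5 for `□` and each
`[i]`, the bridge axiom, IOA, the n-choice axioms (for `n > 0`), with modus ponens and
necessitation (applied to theorems). `Hderiv n m Γ φ` is `Γ ⊢_{Ldm_n^m} φ`. -/
inductive Hderiv (n m : ℕ) : Set (Fml m) → Fml m → Prop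
  | prem {Γ} {φ} (h : φ ∈ Γ) : Hderiv n m Γ φ
  | ax1 {Γ} (φ ψ : Fml m) : Hderiv n m Γ (φ.impF (ψ.impF φ))
  | ax2 {Γ} (φ ψ χ : Fml m) :
      Hderiv n m Γ ((φ.impF (ψ.impF χ)).impF ((φ.impF ψ).impF (φ.impF χ)))
  | ax3 {Γ} (φ ψ : Fml m) :
      Hderiv n m Γ ((ψ.negF.impF φ.negF).impF (φ.impF ψ))
  | boxK {Γ} (φ ψ : Fml m) :
      Hderiv n m Γ ((Fml.box (φ.impF ψ)).impF ((Fml.box φ).impF (Fml.box ψ)))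
  | boxT {Γ} (φ : Fml m) : Hderiv n m Γ ((Fml.box φ).impF φ)
  | box5 {Γ} (φ : Fml m) : Hderiv n m Γ ((Fml.dia φ).impF (Fml.box (Fml.dia φ)))
  | boxDual {Γ} (φ : Fml m) : Hderiv n m Γ (Fml.or (Fml.box φ) (Fml.dia φ.negF))
  | agK {Γ} (i : Fin m) (φ ψ : Fml m) :
      Hderiv n m Γ ((Fml.ag i (φ.impF ψ)).impF ((Fml.ag i φ).impF (Fml.ag i ψ)))
  | agT {Γ} (i : Fin m) (φ : Fml m) : Hderiv n m Γ ((Fml.ag i φ).impF φ)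
  | ag5 {Γ} (i : Fin m) (φ : Fml m) :
      Hderiv n m Γ ((Fml.dag i φ).impF (Fml.ag i (Fml.dag i φ)))
  | agDual {Γ} (i : Fin m) (φ : Fml m) :
      Hderiv n m Γ (Fml.or (Fml.ag i φ) (Fml.dag i φ.negF))
  | bridge {Γ} (i : Fin m) (φ : Fml m) :
      Hderiv n m Γ ((Fml.box φ).impF (Fml.ag i φ))
  | ioa {Γ} (f : Fin m → Fml m) : Hderiv n m Γ (ioaAx f)
  | apc {Γ} (hn : 0 < n) (i : Fin m) (f : ℕ → Fml m) :
      Hderiv n m Γ (apcAx i f (n-1))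
  | mp {Γ} {φ ψ} : Hderiv n m Γ (φ.impF ψ) → Hderiv n m Γ φ → Hderiv n m Γ ψ
  | nec {Γ} {φ} : Hderiv n m ∅ φ → Hderiv n m Γ (Fml.box φ)

/-- A relational atom `R_i x y`. -/
abbrev RAtom (m : ℕ) : Type := Fin m × ℕ × ℕ
/-- The relational part of a labelled sequent: a multiset of relational atoms. -/
abbrev RAtoms (m : ℕ) : Type := Multiset (RAtom m)
/-- A labelled formula `x : φ`. -/
abbrev LFml (m : ℕ) : Type := ℕ × Fml m
/-- The formula part of a labelled sequent: a multiset of labelled formulas. -/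
abbrev LFmls (m : ℕ) : Type := Multiset (LFml m)

/-- The label `v` does not occur in the labelled sequent `R, Γ` (eigenvariable condition). -/
def freshIn {m : ℕ} (v : ℕ) (R : RAtoms m) (Γ : LFmls m) : Prop :=
  (∀ a ∈ R, a.2.1 ≠ v ∧ a.2.2 ≠ v) ∧ ∀ e ∈ Γ, e.1 ≠ v

/-- `Reach R i w u`: `u` is `i`-reachable from `w`, i.e. there is a (possibly empty)
path of `R_i`-atoms of `R` (traversed in either direction) connecting `w` to `u`. -/
inductive Reach {m : ℕ} (R : RAtoms m) (i : Fin m) : ℕ → ℕ → Prop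
  | refl (w : ℕ) : Reach R i w w
  | fwd {w u v : ℕ} : Reach R i w u → ((i, u, v) : RAtom m) ∈ R → Reach R i w v
  | bwd {w u v : ℕ} : Reach R i w u → ((i, v, u) : RAtom m) ∈ R → Reach R i w v

/-- The relational atoms `R_1 u_1 v, …, R_m u_m v` used by the rule (IOA). -/
def ioaAtoms {m : ℕ} (u : Fin m → ℕ) (v : ℕ) : RAtoms m :=
  Multiset.ofList ((List.finRange m).map fun i => ((i, u i, v) : RAtom m))

/-- Which optional rules are present in a labelled calculus, and whether the
`[i]`-rule keeps its principal formula in the premise. -/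
structure Flags : Type where
  refl : Bool    -- (refl_i)
  eucl : Bool    -- (eucl_i)
  diaAg : Bool   -- (⟨i⟩)
  pr : Bool      -- (Pr_i)
  ioa : Bool     -- (IOA)
  agKeep : Bool  -- premise of ([i]) keeps w:[i]φ

/-- `SeqH fl n m h R Γ`: the labelled sequent `R, Γ` has a derivation of height at most
`h` in the labelled calculus determined by `fl` (with parameters `n`, `m`). -/
inductive SeqH (fl : Flags) (n m : ℕ) : ℕ → RAtoms m → LFmls m → Prop
  | id {h : ℕ} {R : RAtoms m} {Γ : LFmls m} (w p : ℕ) :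
      SeqH fl n m h R ((w, Fml.pos p) ::ₘ (w, Fml.neg p) ::ₘ Γ)
  | andR {h R Γ} {w : ℕ} {φ ψ : Fml m} :
      SeqH fl n m h R ((w, Fml.and φ ψ) ::ₘ (w, φ) ::ₘ Γ) →
      SeqH fl n m h R ((w, Fml.and φ ψ) ::ₘ (w, ψ) ::ₘ Γ) →
      SeqH fl n m (h+1) R ((w, Fml.and φ ψ) ::ₘ Γ)
  | orR {h R Γ} {w : ℕ} {φ ψ : Fml m} :
      SeqH fl n m h R ((w, Fml.or φ ψ) ::ₘ (w, φ) ::ₘ (w, ψ) ::ₘ Γ) →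
      SeqH fl n m (h+1) R ((w, Fml.or φ ψ) ::ₘ Γ)
  | boxR {h R Γ} {w v : ℕ} {φ : Fml m}
      (hv : freshIn v R ((w, Fml.box φ) ::ₘ Γ)) :
      SeqH fl n m h R ((w, Fml.box φ) ::ₘ (v, φ) ::ₘ Γ) →
      SeqH fl n m (h+1) R ((w, Fml.box φ) ::ₘ Γ)
  | diaR {h R Γ} {w u : ℕ} {φ : Fml m} :
      SeqH fl n m h R ((w, Fml.dia φ) ::ₘ (u, φ) ::ₘ Γ) →
      SeqH fl n m (h+1) R ((w, Fml.dia φ) ::ₘ Γ)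
  | agR {h R Γ} {w v : ℕ} {i : Fin m} {φ : Fml m} (hfl : fl.agKeep = false)
      (hv : freshIn v R ((w, Fml.ag i φ) ::ₘ Γ)) :
      SeqH fl n m h (((i, w, v) : RAtom m) ::ₘ R) ((v, φ) ::ₘ Γ) →
      SeqH fl n m (h+1) R ((w, Fml.ag i φ) ::ₘ Γ)
  | agRKeep {h R Γ} {w v : ℕ} {i : Fin m} {φ : Fml m} (hfl : fl.agKeep = true)
      (hv : freshIn v R ((w, Fml.ag i φ) ::ₘ Γ)) :
      SeqH fl n m h (((i, w, v) : RAtom m) ::ₘ R) ((w, Fml.ag i φ) ::ₘ (v, φ) ::ₘ Γ) →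
      SeqH fl n m (h+1) R ((w, Fml.ag i φ) ::ₘ Γ)
  | dagR {h R Γ} {w u : ℕ} {i : Fin m} {φ : Fml m} (hfl : fl.diaAg = true) :
      SeqH fl n m h (((i, w, u) : RAtom m) ::ₘ R) ((w, Fml.dag i φ) ::ₘ (u, φ) ::ₘ Γ) →
      SeqH fl n m (h+1) (((i, w, u) : RAtom m) ::ₘ R) ((w, Fml.dag i φ) ::ₘ Γ)
  | reflR {h R Γ} {i : Fin m} {w : ℕ} (hfl : fl.refl = true) :
      SeqH fl n m h (((i, w, w) : RAtom m) ::ₘ R) Γ →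
      SeqH fl n m (h+1) R Γ
  | euclR {h R Γ} {i : Fin m} {w u v : ℕ} (hfl : fl.eucl = true) :
      SeqH fl n m h (((i, w, u) : RAtom m) ::ₘ ((i, w, v) : RAtom m) ::ₘ
        ((i, u, v) : RAtom m) ::ₘ R) Γ →
      SeqH fl n m (h+1) (((i, w, u) : RAtom m) ::ₘ ((i, w, v) : RAtom m) ::ₘ R) Γ
  | ioaR {h R Γ} (hfl : fl.ioa = true) (u : Fin m → ℕ) (v : ℕ) (hv : freshIn v R Γ) :
      SeqH fl n m h (ioaAtoms u v + R) Γ →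
      SeqH fl n m (h+1) R Γ
  | apcR {h R Γ} (hn : 0 < n) (i : Fin m) (w : Fin (n+1) → ℕ) :
      (∀ k j : Fin (n+1), k < j → SeqH fl n m h (((i, w k, w j) : RAtom m) ::ₘ R) Γ) →
      SeqH fl n m (h+1) R Γ
  | prR {h R Γ} {w u : ℕ} {i : Fin m} {φ : Fml m} (hfl : fl.pr = true)
      (hreach : Reach R i w u) :
      SeqH fl n m h R ((w, Fml.dag i φ) ::ₘ (u, φ) ::ₘ Γ) →
      SeqH fl n m (h+1) R ((w, Fml.dag i φ) ::ₘ Γ)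

/-- Derivability (of some height) in the labelled calculus determined by `fl`. -/
def Seq (fl : Flags) (n m : ℕ) (R : RAtoms m) (Γ : LFmls m) : Prop :=
  ∃ h, SeqH fl n m h R Γ

/-- The calculus `G3Ldm_n^m`. -/
def G3flags : Flags := ⟨true, true, true, false, true, false⟩
/-- The calculus `G3Ldm_n^m + PR`. -/
def G3PRflags : Flags := ⟨true, true, true, true, true, false⟩
/-- `G3Ldm_n^m + PR` without the rules `(refl_i)`. -/
def G3PRnoReflFlags : Flags := ⟨false, true, true, true, true, false⟩
/-- `G3Ldm_n^m + PR` without the rules `(eucl_i)`. -/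
def G3PRnoEuclFlags : Flags := ⟨true, false, true, true, true, false⟩
/-- The refined calculus `Ldm_n^m L`. -/
def LdmLflags : Flags := ⟨false, false, false, true, true, true⟩
/-- The refined single-agent calculus `Ldm_n^1 L` (no (IOA)). -/
def LdmL1flags : Flags := ⟨false, false, false, true, false, true⟩

/-- Substitution of the label `y` for the label `x`. -/
def substLab (x y v : ℕ) : ℕ := if v = x then y else v

def substR {m : ℕ} (x y : ℕ) (R : RAtoms m) : RAtoms m :=
  R.map fun a => (a.1, substLab x y a.2.1, substLab x y a.2.2)

def substF {m : ℕ} (x y : ℕ) (Γ : LFmls m) : LFmls m :=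
  Γ.map fun e => (substLab x y e.1, e.2)

/-- Height-preserving invertibility of every inference rule of the calculus given by `fl`. -/
def InvertAll (fl : Flags) (n m : ℕ) : Prop :=
  (∀ h R Γ (w : ℕ) (φ ψ : Fml m), SeqH fl n m h R ((w, Fml.and φ ψ) ::ₘ Γ) →
     SeqH fl n m h R ((w, Fml.and φ ψ) ::ₘ (w, φ) ::ₘ Γ) ∧
     SeqH fl n m h R ((w, Fml.and φ ψ) ::ₘ (w, ψ) ::ₘ Γ)) ∧
  (∀ h R Γ (w : ℕ) (φ ψ : Fml m), SeqH fl n m h R ((w, Fml.or φ ψ) ::ₘ Γ) →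
     SeqH fl n m h R ((w, Fml.or φ ψ) ::ₘ (w, φ) ::ₘ (w, ψ) ::ₘ Γ)) ∧
  (∀ h R Γ (w v : ℕ) (φ : Fml m), freshIn v R ((w, Fml.box φ) ::ₘ Γ) →
     SeqH fl n m h R ((w, Fml.box φ) ::ₘ Γ) →
     SeqH fl n m h R ((w, Fml.box φ) ::ₘ (v, φ) ::ₘ Γ)) ∧
  (∀ h R Γ (w u : ℕ) (φ : Fml m), SeqH fl n m h R ((w, Fml.dia φ) ::ₘ Γ) →
     SeqH fl n m h R ((w, Fml.dia φ) ::ₘ (u, φ) ::ₘ Γ)) ∧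
  (fl.agKeep = false → ∀ h R Γ (w v : ℕ) (i : Fin m) (φ : Fml m),
     freshIn v R ((w, Fml.ag i φ) ::ₘ Γ) →
     SeqH fl n m h R ((w, Fml.ag i φ) ::ₘ Γ) →
     SeqH fl n m h (((i, w, v) : RAtom m) ::ₘ R) ((v, φ) ::ₘ Γ)) ∧
  (fl.agKeep = true → ∀ h R Γ (w v : ℕ) (i : Fin m) (φ : Fml m),
     freshIn v R ((w, Fml.ag i φ) ::ₘ Γ) →
     SeqH fl n m h R ((w, Fml.ag i φ) ::ₘ Γ) →
     SeqH fl n m h (((i, w, v) : RAtom m) ::ₘ R) ((w, Fml.ag i φ) ::ₘ (v, φ) ::ₘ Γ)) ∧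
  (fl.diaAg = true → ∀ h R Γ (w u : ℕ) (i : Fin m) (φ : Fml m),
     SeqH fl n m h (((i, w, u) : RAtom m) ::ₘ R) ((w, Fml.dag i φ) ::ₘ Γ) →
     SeqH fl n m h (((i, w, u) : RAtom m) ::ₘ R) ((w, Fml.dag i φ) ::ₘ (u, φ) ::ₘ Γ)) ∧
  (fl.refl = true → ∀ h R Γ (i : Fin m) (w : ℕ), SeqH fl n m h R Γ →
     SeqH fl n m h (((i, w, w) : RAtom m) ::ₘ R) Γ) ∧
  (fl.eucl = true → ∀ h R Γ (i : Fin m) (w u v : ℕ),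
     SeqH fl n m h (((i, w, u) : RAtom m) ::ₘ ((i, w, v) : RAtom m) ::ₘ R) Γ →
     SeqH fl n m h (((i, w, u) : RAtom m) ::ₘ ((i, w, v) : RAtom m) ::ₘ
       ((i, u, v) : RAtom m) ::ₘ R) Γ) ∧
  (fl.ioa = true → ∀ h R Γ (u : Fin m → ℕ) (v : ℕ), freshIn v R Γ →
     SeqH fl n m h R Γ → SeqH fl n m h (ioaAtoms u v + R) Γ) ∧
  (0 < n → ∀ h R Γ (i : Fin m) (w : Fin (n+1) → ℕ) (k j : Fin (n+1)), k < j →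
     SeqH fl n m h R Γ → SeqH fl n m h (((i, w k, w j) : RAtom m) ::ₘ R) Γ) ∧
  (fl.pr = true → ∀ h R Γ (w u : ℕ) (i : Fin m) (φ : Fml m), Reach R i w u →
     SeqH fl n m h R ((w, Fml.dag i φ) ::ₘ Γ) →
     SeqH fl n m h R ((w, Fml.dag i φ) ::ₘ (u, φ) ::ₘ Γ))

/-- A labelled sequent `R, Γ` is satisfied in `M` under the interpretation `I`. -/
def SeqSat {n m : ℕ} {W : Type} (M : ModelOn n m W) (I : ℕ → W)
    (R : RAtoms m) (Γ : LFmls m) : Prop :=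
  (∀ a ∈ R, M.rel a.1 (I a.2.1) (I a.2.2)) → ∃ e ∈ Γ, Sat M (I e.1) e.2

/-- A labelled sequent is valid: satisfied in every model under every interpretation. -/
def SeqValid (n m : ℕ) (R : RAtoms m) (Γ : LFmls m) : Prop :=
  ∀ (W : Type) (M : ModelOn n m W) (I : ℕ → W), SeqSat M I R Γ

/-!
A relational atom `R_i ww` can always be added to a derivation, since every rule is
stable under renaming labels and under relational weakening. From `R_i wu, R_i ww, R_i uw,
R, Γ` the rule `(eucl_i)` (with `v := w`) removes `R_i uw`, and `(refl_i)` then removes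
`R_i ww`.
-/

section Relabel

variable {m : ℕ}

def relabelR (f : ℕ → ℕ) (R : RAtoms m) : RAtoms m :=
  R.map fun a => (a.1, f a.2.1, f a.2.2)

def relabelF (f : ℕ → ℕ) (Γ : LFmls m) : LFmls m :=
  Γ.map fun e => (f e.1, e.2)

@[simp] lemma relabelR_cons (f : ℕ → ℕ) (a : RAtom m) (R : RAtoms m) :
    relabelR f (a ::ₘ R) = (a.1, f a.2.1, f a.2.2) ::ₘ relabelR f R :=
  Multiset.map_cons _ _ _

@[simp] lemma relabelF_cons (f : ℕ → ℕ) (e : LFml m) (Γ : LFmls m) :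
    relabelF f (e ::ₘ Γ) = (f e.1, e.2) ::ₘ relabelF f Γ :=
  Multiset.map_cons _ _ _

lemma relabelR_add (f : ℕ → ℕ) (R R' : RAtoms m) :
    relabelR f (R + R') = relabelR f R + relabelR f R' :=
  Multiset.map_add _ _ _

@[simp] lemma relabelR_id (R : RAtoms m) : relabelR id R = R :=
  Multiset.map_id' R

@[simp] lemma relabelF_id (Γ : LFmls m) : relabelF id Γ = Γ :=
  Multiset.map_id' Γ

lemma relabelR_ioaAtoms (f : ℕ → ℕ) (u : Fin m → ℕ) (v : ℕ) :
    relabelR f (ioaAtoms u v) = ioaAtoms (f ∘ u) (f v) := by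
  simp only [relabelR, ioaAtoms, Multiset.map_coe, List.map_map]
  rfl

lemma relabelR_update_of_forall_ne {f : ℕ → ℕ} {v v' : ℕ} {R : RAtoms m}
    (hR : ∀ a ∈ R, a.2.1 ≠ v ∧ a.2.2 ≠ v) :
    relabelR (Function.update f v v') R = relabelR f R :=
  Multiset.map_congr rfl fun a ha => by
    simp [Function.update_of_ne (hR a ha).1, Function.update_of_ne (hR a ha).2]

lemma relabelF_update_of_forall_ne {f : ℕ → ℕ} {v v' : ℕ} {Γ : LFmls m}
    (hΓ : ∀ e ∈ Γ, e.1 ≠ v) :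
    relabelF (Function.update f v v') Γ = relabelF f Γ :=
  Multiset.map_congr rfl fun e he => by simp [Function.update_of_ne (hΓ e he)]

lemma exists_freshIn (R : RAtoms m) (Γ : LFmls m) : ∃ v, freshIn v R Γ := by
  obtain ⟨v, hv⟩ := Infinite.exists_notMem_finset
    (R.map (·.2.1) + R.map (·.2.2) + Γ.map (·.1)).toFinset
  refine ⟨v, fun a ha => ⟨?_, ?_⟩, fun e he => ?_⟩ <;> rintro rfl <;>
    exact hv (by simp only [Multiset.mem_toFinset, Multiset.mem_add, Multiset.mem_map]; aesop)

lemma Reach.relabel_add {R : RAtoms m} {i : Fin m} {w u : ℕ} (hr : Reach R i w u)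
    (f : ℕ → ℕ) (S : RAtoms m) : Reach (relabelR f R + S) i (f w) (f u) := by
  induction hr with
  | refl => exact .refl _
  | fwd _ ha ih => exact ih.fwd (Multiset.mem_add.2 (.inl (Multiset.mem_map_of_mem _ ha)))
  | bwd _ ha ih => exact ih.bwd (Multiset.mem_add.2 (.inl (Multiset.mem_map_of_mem _ ha)))

end Relabel

namespace SeqH

variable {fl : Flags} {n m h : ℕ}

/-- Eigenvariables are renamed to labels fresh for the relabelled, weakened conclusion;
since they do not occur there, updating `f` at them changes nothing else. -/
theorem relabel_add {R : RAtoms m} {Γ : LFmls m} (d : SeqH fl n m h R Γ)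
    (f : ℕ → ℕ) (S : RAtoms m) : SeqH fl n m h (relabelR f R + S) (relabelF f Γ) := by
  induction d generalizing f S with
  | id w p =>
    simp only [relabelF_cons]
    exact .id _ p
  | andR _ _ ih₁ ih₂ =>
    simp only [relabelF_cons] at ih₁ ih₂ ⊢
    exact .andR (ih₁ f S) (ih₂ f S)
  | orR _ ih =>
    simp only [relabelF_cons] at ih ⊢
    exact .orR (ih f S)
  | @boxR h R Γ w v φ hv _ ih =>
    obtain ⟨v', hv'⟩ := exists_freshIn (relabelR f R + S) (relabelF f ((w, .box φ) ::ₘ Γ))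
    have d' := ih (Function.update f v v') S
    simp only [relabelF_cons, Function.update_self, relabelR_update_of_forall_ne hv.1,
      Function.update_of_ne (hv.2 _ (Multiset.mem_cons_self _ _)),
      relabelF_update_of_forall_ne fun e he => hv.2 e (Multiset.mem_cons_of_mem he)] at d' hv' ⊢
    exact .boxR hv' d'
  | diaR _ ih =>
    simp only [relabelF_cons] at ih ⊢
    exact .diaR (ih f S)
  | @agR h R Γ w v i φ hfl hv _ ih =>
    obtain ⟨v', hv'⟩ := exists_freshIn (relabelR f R + S) (relabelF f ((w, .ag i φ) ::ₘ Γ))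
    have d' := ih (Function.update f v v') S
    simp only [relabelR_cons, relabelF_cons, Multiset.cons_add, Function.update_self,
      Function.update_of_ne (hv.2 _ (Multiset.mem_cons_self _ _)),
      relabelR_update_of_forall_ne hv.1,
      relabelF_update_of_forall_ne fun e he => hv.2 e (Multiset.mem_cons_of_mem he)] at d' hv' ⊢
    exact .agR hfl hv' d'
  | @agRKeep h R Γ w v i φ hfl hv _ ih =>
    obtain ⟨v', hv'⟩ := exists_freshIn (relabelR f R + S) (relabelF f ((w, .ag i φ) ::ₘ Γ))
    have d' := ih (Function.update f v v') S
    simp only [relabelR_cons, relabelF_cons, Multiset.cons_add, Function.update_self,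
      Function.update_of_ne (hv.2 _ (Multiset.mem_cons_self _ _)),
      relabelR_update_of_forall_ne hv.1,
      relabelF_update_of_forall_ne fun e he => hv.2 e (Multiset.mem_cons_of_mem he)] at d' hv' ⊢
    exact .agRKeep hfl hv' d'
  | dagR hfl _ ih =>
    simp only [relabelR_cons, relabelF_cons, Multiset.cons_add] at ih ⊢
    exact .dagR hfl (ih f S)
  | reflR hfl _ ih =>
    simp only [relabelR_cons, Multiset.cons_add] at ih
    exact .reflR hfl (ih f S)
  | euclR hfl _ ih =>
    simp only [relabelR_cons, Multiset.cons_add] at ih ⊢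
    exact .euclR hfl (ih f S)
  | @ioaR h R Γ hfl u v hv _ ih =>
    obtain ⟨v', hv'⟩ := exists_freshIn (relabelR f R + S) (relabelF f Γ)
    have d' := ih (Function.update f v v') S
    rw [relabelR_add, relabelR_ioaAtoms, Function.update_self, add_assoc,
      relabelR_update_of_forall_ne hv.1, relabelF_update_of_forall_ne hv.2] at d'
    exact .ioaR hfl _ v' hv' d'
  | apcR hn i w _ ih =>
    simp only [relabelR_cons, Multiset.cons_add] at ih
    exact .apcR hn i (f ∘ w) fun k j hkj => ih k j hkj f S
  | prR hfl hreach _ ih =>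
    simp only [relabelF_cons] at ih ⊢
    exact .prR hfl (hreach.relabel_add f S) (ih f S)

theorem weaken {R : RAtoms m} {Γ : LFmls m} (d : SeqH fl n m h R Γ) (S : RAtoms m) :
    SeqH fl n m h (R + S) Γ := by
  simpa using d.relabel_add _root_.id S

theorem sym_admissible (hrefl : fl.refl = true) (heucl : fl.eucl = true) {i : Fin m}
    {w u : ℕ} {R : RAtoms m} {Γ : LFmls m}
    (d : SeqH fl n m h ((i, w, u) ::ₘ (i, u, w) ::ₘ R) Γ) :
    SeqH fl n m (h + 2) ((i, w, u) ::ₘ R) Γ := by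
  have d₁ : SeqH fl n m h ((i, w, u) ::ₘ (i, w, w) ::ₘ (i, u, w) ::ₘ R) Γ := by
    have d' := d.weaken {(i, w, w)}
    rwa [add_comm, Multiset.singleton_add, Multiset.cons_swap (i, w, w)] at d'
  have d₂ : SeqH fl n m (h + 1) ((i, w, w) ::ₘ (i, w, u) ::ₘ R) Γ := by
    rw [Multiset.cons_swap]
    exact euclR heucl d₁
  exact reflR hrefl d₂

end SeqH

theorem g3_sym_admissible_general (n m : ℕ)
    (i : Fin m) (w u : ℕ) (R : RAtoms m) (Γ : LFmls m)
    (hd : Seq G3flags n m (((i, w, u) : RAtom m) ::ₘ ((i, u, w) : RAtom m) ::ₘ R) Γ) :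
    Seq G3flags n m (((i, w, u) : RAtom m) ::ₘ R) Γ := by
  obtain ⟨h, d⟩ := hd
  exact ⟨h + 2, d.sym_admissible rfl rfl⟩

/-- The symmetry rule `(sym_i)` is admissible in `G3Ldm_n^m`. -/
theorem g3_sym_admissible (n m : ℕ) (hm : 1 ≤ m)
    (i : Fin m) (w u : ℕ) (R : RAtoms m) (Γ : LFmls m)
    (hd : Seq G3flags n m (((i, w, u) : RAtom m) ::ₘ ((i, u, w) : RAtom m) ::ₘ R) Γ) :
    Seq G3flags n m (((i, w, u) : RAtom m) ::ₘ R) Γ :=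
  g3_sym_admissible_general n m i w u R Γ hd

end Stit
end

section
/- (refl_i)-Elimination: every labelled sequent Λ derivable in G3Ldm_n^m + PR is derivable in G3Ldm_n^m + PR without any use of the rules (refl_i), i ∈ Ag. -/
namespace Stit

/-! In the presence of `(Pr_i)` a derivation only depends on its relational atoms through
`i`-reachability: every atom of a premise may be replaced by a path between its endpoints.
Under this reading the rules `(refl_i)`, `(eucl_i)` and `(⟨i⟩)` become trivial, since
`R_i ww` is the empty path, `R_i uv` is the path `u, w, v` through `R_i wu, R_i wv`, and
`(⟨i⟩)` is the instance of `(Pr_i)` along a single atom. -/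

section ReflElim

variable {m : ℕ}

namespace Reach

variable {R : RAtoms m} {i : Fin m}

lemma of_mem {x y : ℕ} (h : ((i, x, y) : RAtom m) ∈ R) : Reach R i x y :=
  .fwd (.refl x) h

lemma trans {a b c : ℕ} (hab : Reach R i a b) (hbc : Reach R i b c) : Reach R i a c := by
  induction hbc with
  | refl => exact hab
  | fwd _ e ih => exact .fwd ih e
  | bwd _ e ih => exact .bwd ih e

lemma symm {a b : ℕ} (h : Reach R i a b) : Reach R i b a := by
  induction h with
  | refl => exact .refl _
  | fwd _ e ih => exact (Reach.bwd (.refl _) e).trans ih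
  | bwd _ e ih => exact (Reach.fwd (.refl _) e).trans ih

end Reach

def Spans (R R' : RAtoms m) : Prop :=
  ∀ a ∈ R', Reach R a.1 a.2.1 a.2.2

namespace Spans

variable {R R' : RAtoms m}

lemma refl (R : RAtoms m) : Spans R R := fun _ ha => .of_mem ha

lemma reach {i : Fin m} {w u : ℕ} (hs : Spans R R') (h : Reach R' i w u) : Reach R i w u := by
  induction h with
  | refl => exact .refl _
  | fwd _ e ih => exact ih.trans (hs _ e)
  | bwd _ e ih => exact ih.trans (hs _ e).symm

lemma cons_of_reach {i : Fin m} {x y : ℕ} (hs : Spans R R') (h : Reach R i x y) :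
    Spans R (((i, x, y) : RAtom m) ::ₘ R') := by
  intro a ha
  rcases Multiset.mem_cons.1 ha with rfl | ha
  · exact h
  · exact hs a ha

lemma add_left (S : RAtoms m) (hs : Spans R R') : Spans (S + R) (S + R') := by
  intro a ha
  have lift : Spans (S + R) R := fun _ hb => .of_mem (Multiset.mem_add.2 (.inr hb))
  rcases Multiset.mem_add.1 ha with ha | ha
  · exact .of_mem (Multiset.mem_add.2 (.inl ha))
  · exact lift.reach (hs a ha)

lemma cons (a : RAtom m) (hs : Spans R R') : Spans (a ::ₘ R) (a ::ₘ R') := by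
  simpa only [Multiset.singleton_add] using hs.add_left {a}

end Spans

lemma freshIn.of_subset {v : ℕ} {R R' : RAtoms m} {Γ : LFmls m} (hsub : R ⊆ R')
    (h : freshIn v R' Γ) : freshIn v R Γ :=
  ⟨fun a ha => h.1 a (hsub ha), h.2⟩

lemma SeqH.succ {fl : Flags} {n h : ℕ} {R : RAtoms m} {Γ : LFmls m}
    (hd : SeqH fl n m h R Γ) : SeqH fl n m (h + 1) R Γ := by
  induction hd with
  | id w p => exact .id w p
  | andR _ _ ih1 ih2 => exact .andR ih1 ih2
  | orR _ ih => exact .orR ih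
  | boxR hv _ ih => exact .boxR hv ih
  | diaR _ ih => exact .diaR ih
  | agR hfl hv _ ih => exact .agR hfl hv ih
  | agRKeep hfl hv _ ih => exact .agRKeep hfl hv ih
  | dagR hfl _ ih => exact .dagR hfl ih
  | reflR hfl _ ih => exact .reflR hfl ih
  | euclR hfl _ ih => exact .euclR hfl ih
  | ioaR hfl u v hv _ ih => exact .ioaR hfl u v hv ih
  | apcR hn i w _ ih => exact .apcR hn i w ih
  | prR hfl hreach _ ih => exact .prR hfl hreach ih

theorem SeqH.of_spans {fl fl' : Flags} {n h : ℕ} {R' : RAtoms m} {Γ : LFmls m}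
    (hd : SeqH fl n m h R' Γ) (hpr : fl'.pr = true) (hag : fl'.agKeep = fl.agKeep)
    (hioa : fl.ioa = true → fl'.ioa = true) :
    ∀ {R : RAtoms m}, R ⊆ R' → Spans R R' → SeqH fl' n m h R Γ := by
  induction hd with
  | id w p => exact fun _ _ => .id w p
  | andR _ _ ih1 ih2 => exact fun hsub hs => .andR (ih1 hsub hs) (ih2 hsub hs)
  | orR _ ih => exact fun hsub hs => .orR (ih hsub hs)
  | boxR hv _ ih => exact fun hsub hs => .boxR (hv.of_subset hsub) (ih hsub hs)
  | diaR _ ih => exact fun hsub hs => .diaR (ih hsub hs)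
  | agR hfl hv _ ih =>
      exact fun hsub hs => .agR (hag.trans hfl) (hv.of_subset hsub)
        (ih (Multiset.cons_subset_cons hsub) (hs.cons _))
  | agRKeep hfl hv _ ih =>
      exact fun hsub hs => .agRKeep (hag.trans hfl) (hv.of_subset hsub)
        (ih (Multiset.cons_subset_cons hsub) (hs.cons _))
  | dagR _ _ ih =>
      exact fun hsub hs => .prR hpr (hs _ (Multiset.mem_cons_self _ _)) (ih hsub hs)
  | @reflR _ R₀ _ i w _ _ ih =>
      intro R hsub hs
      exact (ih (Multiset.Subset.trans hsub (Multiset.subset_cons R₀ _))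
        (hs.cons_of_reach (.refl w))).succ
  | @euclR _ R₀ _ i w u v _ _ ih =>
      intro R hsub hs
      have hwu : Reach R i w u := hs _ (Multiset.mem_cons_self _ _)
      have hwv : Reach R i w v := hs _ (Multiset.mem_cons_of_mem (Multiset.mem_cons_self _ _))
      have huv : Reach R i u v := hwu.symm.trans hwv
      rw [Multiset.cons_swap _ ((i, u, v) : RAtom m), Multiset.cons_swap _ ((i, u, v) : RAtom m)]
        at ih
      exact (ih (Multiset.Subset.trans hsub (Multiset.subset_cons _ _))
        (hs.cons_of_reach huv)).succ
  | ioaR hfl u v hv _ ih =>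
      intro R hsub hs
      refine .ioaR (hioa hfl) u v (hv.of_subset hsub) (ih ?_ (hs.add_left _))
      intro a ha
      rcases Multiset.mem_add.1 ha with ha | ha
      · exact Multiset.mem_add.2 (.inl ha)
      · exact Multiset.mem_add.2 (.inr (hsub ha))
  | apcR hn i w _ ih =>
      exact fun hsub hs => .apcR hn i w fun k j hkj =>
        ih k j hkj (Multiset.cons_subset_cons hsub) (hs.cons _)
  | prR _ hreach _ ih => exact fun hsub hs => .prR hpr (hs.reach hreach) (ih hsub hs)

end ReflElim

theorem refl_elimination_general (n m : ℕ)
    (R : RAtoms m) (Γ : LFmls m)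
    (hd : Seq G3PRflags n m R Γ) :
    Seq G3PRnoReflFlags n m R Γ := by
  obtain ⟨h, hd⟩ := hd
  exact ⟨h, hd.of_spans (fl' := G3PRnoReflFlags) rfl rfl (fun _ => rfl)
    (Multiset.Subset.refl R) (Spans.refl R)⟩

/-- `(refl_i)`-elimination: every sequent derivable in `G3Ldm_n^m + PR`
is derivable in `G3Ldm_n^m + PR` without any use of the rules `(refl_i)`. -/
theorem refl_elimination (n m : ℕ) (hm : 1 ≤ m)
    (R : RAtoms m) (Γ : LFmls m)
    (hd : Seq G3PRflags n m R Γ) :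
    Seq G3PRnoReflFlags n m R Γ :=
  refl_elimination_general n m R Γ hd

end Stit
end

section
/- Soundness of Ldm_n^m L: every labelled sequent derivable in the calculus Ldm_n^m L is valid, i.e., is satisfied in every Ldm_n^m-model under every interpretation of the labels. In particular, if x:φ is derivable in Ldm_n^m L then φ is valid on all Ldm_n^m-models. -/
/-!
Every rule preserves validity of sequents. For the rules that only add formulas this holds in
each model under each interpretation: the added formulas force the principal one. The relational rules add atoms that are true in every model by (C1)–(C3), and (Pr_i) is
sound because `R_i` is an equivalence relation. For the rules with an eigenvariable `v`
(`□`, `[i]`, IOA), a countermodel to the conclusion becomes a countermodel to the premise by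
reinterpreting `v` as the witnessing world, which does not affect the conclusion since `v`
does not occur in it.
-/

namespace Stit

section Soundness

variable {n m : ℕ} {W : Type} {M : ModelOn n m W} {I : ℕ → W} {R : RAtoms m} {Γ : LFmls m}

theorem Reach.rel (hR : ∀ a ∈ R, M.rel a.1 (I a.2.1) (I a.2.2)) {i : Fin m} {w u : ℕ}
    (h : Reach R i w u) : M.rel i (I w) (I u) := by
  induction h with
  | refl => exact M.refl _ _
  | fwd _ hmem ih => exact M.trans _ _ _ _ ih (hR _ hmem)
  | bwd _ hmem ih => exact M.trans _ _ _ _ ih (M.symm _ _ _ (hR _ hmem))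

theorem mem_ioaAtoms {u : Fin m → ℕ} {v : ℕ} {a : RAtom m} :
    a ∈ ioaAtoms u v ↔ ∃ i, a = (i, u i, v) := by
  simp [ioaAtoms, eq_comm]

namespace SeqSat

theorem of_mem {e : LFml m} (he : e ∈ Γ) (hs : Sat M (I e.1) e.2) : SeqSat M I R Γ :=
  fun _ => ⟨e, he, hs⟩

theorem of_cons_not {e : LFml m} (h : SeqSat M I R (e ::ₘ Γ)) (he : ¬ Sat M (I e.1) e.2) :
    SeqSat M I R Γ := fun hR => by
  obtain ⟨e', he', hs⟩ := h hR
  rcases Multiset.mem_cons.1 he' with rfl | he'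
  · exact absurd hs he
  · exact ⟨e', he', hs⟩

theorem of_add_rel {R' : RAtoms m} (h : SeqSat M I (R' + R) Γ)
    (hR' : ∀ a ∈ R', M.rel a.1 (I a.2.1) (I a.2.2)) : SeqSat M I R Γ := fun hR =>
  h fun a ha => (Multiset.mem_add.1 ha).elim (hR' a) (hR a)

theorem of_cons_rel {a : RAtom m} (h : SeqSat M I (a ::ₘ R) Γ)
    (ha : M.rel a.1 (I a.2.1) (I a.2.2)) : SeqSat M I R Γ :=
  of_add_rel (R' := {a}) h (by simpa using ha)

theorem absorb {e e' : LFml m} (h : SeqSat M I R (e ::ₘ e' ::ₘ Γ))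
    (himp : (∀ a ∈ R, M.rel a.1 (I a.2.1) (I a.2.2)) → Sat M (I e'.1) e'.2 → Sat M (I e.1) e.2) :
    SeqSat M I R (e ::ₘ Γ) := fun hR => by
  by_cases he' : Sat M (I e'.1) e'.2
  · exact ⟨e, Multiset.mem_cons_self _ _, himp hR he'⟩
  · rw [Multiset.cons_swap] at h
    exact h.of_cons_not he' hR

end SeqSat

theorem freshIn.seqSat_update_iff {v : ℕ} (hv : freshIn v R Γ) (x : W) :
    SeqSat M (Function.update I v x) R Γ ↔ SeqSat M I R Γ := by
  have hR : ∀ a ∈ R, (M.rel a.1 (Function.update I v x a.2.1) (Function.update I v x a.2.2) ↔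
      M.rel a.1 (I a.2.1) (I a.2.2)) := fun a ha => by
    rw [Function.update_of_ne (hv.1 a ha).1, Function.update_of_ne (hv.1 a ha).2]
  have hΓ : ∀ e ∈ Γ, (Sat M (Function.update I v x e.1) e.2 ↔ Sat M (I e.1) e.2) :=
    fun e he => by rw [Function.update_of_ne (hv.2 e he)]
  simp only [SeqSat, forall_congr' fun a => forall_congr' (hR a),
    exists_congr fun e => and_congr_right (hΓ e)]

variable {w u v : ℕ} {φ ψ : Fml m} {i : Fin m}

theorem seqValid_id (p : ℕ) : SeqValid n m R ((w, .pos p) ::ₘ (w, .neg p) ::ₘ Γ) :=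
  fun W M I => by
  by_cases hp : I w ∈ M.val p
  · exact .of_mem (Multiset.mem_cons_self _ _) hp
  · exact .of_mem (Multiset.mem_cons_of_mem (Multiset.mem_cons_self _ _)) hp

theorem SeqValid.cons (h : SeqValid n m R Γ) (e : LFml m) : SeqValid n m R (e ::ₘ Γ) :=
  fun W M I hR => let ⟨e', he', hs⟩ := h W M I hR; ⟨e', Multiset.mem_cons_of_mem he', hs⟩

theorem seqValid_andR (h₁ : SeqValid n m R ((w, .and φ ψ) ::ₘ (w, φ) ::ₘ Γ))
    (h₂ : SeqValid n m R ((w, .and φ ψ) ::ₘ (w, ψ) ::ₘ Γ)) :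
    SeqValid n m R ((w, .and φ ψ) ::ₘ Γ) := fun W M I => by
  by_cases hφ : Sat M (I w) φ
  · exact (h₂ W M I).absorb fun _ hψ => ⟨hφ, hψ⟩
  · rw [Multiset.cons_swap] at h₁
    exact (h₁ W M I).of_cons_not hφ

theorem seqValid_boxR (hv : freshIn v R ((w, .box φ) ::ₘ Γ))
    (h : SeqValid n m R ((w, .box φ) ::ₘ (v, φ) ::ₘ Γ)) :
    SeqValid n m R ((w, .box φ) ::ₘ Γ) := fun W M I => by
  by_cases hφ : Sat M (I w) (.box φ)
  · exact .of_mem (Multiset.mem_cons_self _ _) hφ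
  simp only [Sat, not_forall] at hφ
  obtain ⟨x, hx⟩ := hφ
  rw [← hv.seqSat_update_iff x]
  rw [Multiset.cons_swap] at h
  exact (h W M _).of_cons_not (by simpa using hx)

theorem seqValid_agRKeep (hv : freshIn v R ((w, .ag i φ) ::ₘ Γ))
    (h : SeqValid n m (((i, w, v) : RAtom m) ::ₘ R) ((w, .ag i φ) ::ₘ (v, φ) ::ₘ Γ)) :
    SeqValid n m R ((w, .ag i φ) ::ₘ Γ) := fun W M I => by
  by_cases hφ : Sat M (I w) (.ag i φ)
  · exact .of_mem (Multiset.mem_cons_self _ _) hφ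
  simp only [Sat, not_forall] at hφ
  obtain ⟨x, hwx, hx⟩ := hφ
  have hwv : w ≠ v := hv.2 _ (Multiset.mem_cons_self _ _)
  rw [← hv.seqSat_update_iff x]
  rw [Multiset.cons_swap] at h
  refine ((h W M _).of_cons_rel ?_).of_cons_not ?_
  · simpa [Function.update_of_ne hwv] using hwx
  · simpa using hx

theorem seqValid_agR (hv : freshIn v R ((w, .ag i φ) ::ₘ Γ))
    (h : SeqValid n m (((i, w, v) : RAtom m) ::ₘ R) ((v, φ) ::ₘ Γ)) :
    SeqValid n m R ((w, .ag i φ) ::ₘ Γ) :=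
  seqValid_agRKeep hv (h.cons _)

theorem seqValid_reflR (h : SeqValid n m (((i, w, w) : RAtom m) ::ₘ R) Γ) :
    SeqValid n m R Γ := fun W M I =>
  (h W M I).of_cons_rel (M.refl i (I w))

theorem seqValid_euclR
    (h : SeqValid n m (((i, w, u) : RAtom m) ::ₘ ((i, w, v) : RAtom m) ::ₘ
      ((i, u, v) : RAtom m) ::ₘ R) Γ) :
    SeqValid n m (((i, w, u) : RAtom m) ::ₘ ((i, w, v) : RAtom m) ::ₘ R) Γ :=
  fun W M I hR => by
  refine h W M I ?_
  simp only [Multiset.forall_mem_cons] at hR ⊢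
  obtain ⟨hwu, hwv, hR⟩ := hR
  exact ⟨hwu, hwv, M.trans _ _ _ _ (M.symm _ _ _ hwu) hwv, hR⟩

theorem seqValid_ioaR (us : Fin m → ℕ) (hv : freshIn v R Γ)
    (h : SeqValid n m (ioaAtoms us v + R) Γ) : SeqValid n m R Γ := fun W M I => by
  obtain ⟨x, hx⟩ := M.ioa fun i => I (us i)
  rw [← hv.seqSat_update_iff x]
  refine (h W M _).of_add_rel fun a ha => ?_
  obtain ⟨i, rfl⟩ := mem_ioaAtoms.1 ha
  by_cases hu : us i = v
  · simpa [hu] using M.refl i x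
  · simpa [Function.update_of_ne hu] using hx i

theorem seqValid_apcR (hn : 0 < n) (w : Fin (n + 1) → ℕ)
    (h : ∀ k j : Fin (n + 1), k < j → SeqValid n m (((i, w k, w j) : RAtom m) ::ₘ R) Γ) :
    SeqValid n m R Γ := fun W M I => by
  obtain ⟨k, j, hkj, hrel⟩ := M.apc hn i fun t => I (w t)
  exact (h k j hkj W M I).of_cons_rel hrel

theorem SeqH.seqValid {fl : Flags} {h : ℕ} (hd : SeqH fl n m h R Γ) : SeqValid n m R Γ := by
  induction hd with
  | id w p => exact seqValid_id p
  | andR _ _ ih₁ ih₂ => exact seqValid_andR ih₁ ih₂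
  | orR _ ih =>
    exact fun W M I => ((ih W M I).absorb fun _ => Or.inl).absorb fun _ => Or.inr
  | diaR _ ih => exact fun W M I => (ih W M I).absorb fun _ hφ => ⟨_, hφ⟩
  | agR _ hv _ ih => exact seqValid_agR hv ih
  | agRKeep _ hv _ ih => exact seqValid_agRKeep hv ih
  | dagR _ _ ih =>
    exact fun W M I =>
      (ih W M I).absorb fun hR hφ => ⟨_, hR _ (Multiset.mem_cons_self _ _), hφ⟩
  | reflR _ _ ih => exact seqValid_reflR ih
  | euclR _ _ ih => exact seqValid_euclR ih
  | ioaR _ us _ hv _ ih => exact seqValid_ioaR us hv ih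
  | apcR hn _ w _ ih => exact seqValid_apcR hn w ih
  | prR _ hreach _ ih =>
    exact fun W M I => (ih W M I).absorb fun hR hφ => ⟨_, hreach.rel hR, hφ⟩
  | boxR hv _ ih => exact seqValid_boxR hv ih

end Soundness

theorem ldmL_soundness_general (n m : ℕ) :
    (∀ (R : RAtoms m) (Γ : LFmls m), Seq LdmLflags n m R Γ → SeqValid n m R Γ) ∧
    (∀ (φ : Fml m) (x : ℕ), Seq LdmLflags n m 0 {(x, φ)} → Valid n m φ) := by
  refine ⟨fun R Γ ⟨_, hd⟩ => hd.seqValid, fun φ x ⟨_, hd⟩ W M w => ?_⟩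
  obtain ⟨e, he, hs⟩ := hd.seqValid W M (fun _ => w) (by simp)
  rw [Multiset.mem_singleton] at he
  subst he
  exact hs

/-- Soundness of `Ldm_n^m L`: every derivable labelled sequent is valid;
in particular, if `x:φ` is derivable then `φ` is valid on all `Ldm_n^m`-models. -/
theorem ldmL_soundness (n m : ℕ) (hm : 1 ≤ m) :
    (∀ (R : RAtoms m) (Γ : LFmls m), Seq LdmLflags n m R Γ → SeqValid n m R Γ) ∧
    (∀ (φ : Fml m) (x : ℕ), Seq LdmLflags n m 0 {(x, φ)} → Valid n m φ) :=
  ldmL_soundness_general n m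

end Stit
end
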